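/- arXiv:2508.11881 — 4 statements merged into one kernel-verified Lean document; each statement's English description precedes it below -/
import Mathlib

section
/- Let (X, ℬ, ν) be a probability space and {E_n}_{n≥1} a sequence of measurable sets with ∑_{n=1}^∞ ν(E_n) = ∞ and ν(E_i ∩ E_j) ≤ c · ν(E_i) ν(E_j) for all i ≠ j with i, j > L, where c ≥ 1 and L are constants. Then ν(limsup_{n→∞} E_n) ≥ 1/c. -/
open MeasureTheory Filter Set Finset Topology
open scoped ENNReal

/-! By Cauchy–Schwarz for `f = ∑ k ∈ s, 𝟙 (E k)` against the indicator of its support,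
`(∑ ν (E k))² ≤ ν (⋃ E k) * ∑ᵢ ∑ⱼ ν (E i ∩ E j)` (the Chung–Erdős inequality), and
quasi-independence bounds the double sum by `T + c T²`, where `T = ∑ ν (E k)`. So for `m > L`
the tail union `⋃ k ≥ m, E k` has measure at least `T² / (T + c T²)` for every partial sum `T`
of the divergent tail series, hence at least `1 / c`; the limsup is the decreasing intersection
of these tail unions. -/

namespace MeasureTheory

variable {α : Type*} [MeasurableSpace α] {μ : Measure α}

theorem sq_lintegral_mul_le_lintegral_sq_mul_lintegral_sq {f g : α → ℝ≥0∞}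
    (hf : AEMeasurable f μ) (hg : AEMeasurable g μ) :
    (∫⁻ a, f a * g a ∂μ) ^ 2 ≤ (∫⁻ a, f a ^ 2 ∂μ) * ∫⁻ a, g a ^ 2 ∂μ := by
  have hsqrt (x : ℝ≥0∞) : (x ^ (1 / 2 : ℝ)) ^ 2 = x := by
    rw [← ENNReal.rpow_natCast, ← ENNReal.rpow_mul]; norm_num
  have h_holder := ENNReal.lintegral_mul_le_Lp_mul_Lq μ Real.HolderConjugate.two_two hf hg
  simp only [ENNReal.rpow_two, Pi.mul_apply] at h_holder
  calc (∫⁻ a, f a * g a ∂μ) ^ 2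
      ≤ ((∫⁻ a, f a ^ 2 ∂μ) ^ (1 / 2 : ℝ) * (∫⁻ a, g a ^ 2 ∂μ) ^ (1 / 2 : ℝ)) ^ 2 := by gcongr
    _ = (∫⁻ a, f a ^ 2 ∂μ) * ∫⁻ a, g a ^ 2 ∂μ := by rw [mul_pow, hsqrt, hsqrt]

theorem sq_sum_measure_le_measure_biUnion_mul {ι : Type*} (s : Finset ι) {E : ι → Set α}
    (hE : ∀ i ∈ s, MeasurableSet (E i)) :
    (∑ i ∈ s, μ (E i)) ^ 2 ≤ μ (⋃ i ∈ s, E i) * ∑ i ∈ s, ∑ j ∈ s, μ (E i ∩ E j) := by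
  set V := ⋃ i ∈ s, E i
  set f : α → ℝ≥0∞ := fun a => ∑ i ∈ s, (E i).indicator 1 a
  have hV : MeasurableSet V := s.measurableSet_biUnion hE
  have hf : Measurable f := Finset.measurable_sum _ fun i hi => measurable_one.indicator (hE i hi)
  have hf_lintegral : ∫⁻ a, f a ∂μ = ∑ i ∈ s, μ (E i) := by
    rw [lintegral_finsetSum _ fun i hi => measurable_one.indicator (hE i hi)]
    exact Finset.sum_congr rfl fun i hi => lintegral_indicator_one (hE i hi)
  have hf_sq : ∫⁻ a, f a ^ 2 ∂μ = ∑ i ∈ s, ∑ j ∈ s, μ (E i ∩ E j) := by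
    have hprod (i j : ι) (a : α) :
        (E i).indicator 1 a * (E j).indicator 1 a = (E i ∩ E j).indicator (1 : α → ℝ≥0∞) a :=
      (congrFun inter_indicator_one a).symm
    simp_rw [f, sq, Finset.sum_mul_sum, hprod]
    rw [lintegral_finsetSum _ fun i hi => Finset.measurable_sum _ fun j hj =>
      measurable_one.indicator ((hE i hi).inter (hE j hj))]
    refine Finset.sum_congr rfl fun i hi => ?_
    rw [lintegral_finsetSum _ fun j hj => measurable_one.indicator ((hE i hi).inter (hE j hj))]
    exact Finset.sum_congr rfl fun j hj => lintegral_indicator_one ((hE i hi).inter (hE j hj))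
  have hf_support (a : α) : f a * V.indicator 1 a = f a := by
    by_cases ha : a ∈ V
    · simp [ha]
    · have : ∀ i ∈ s, a ∉ E i := fun i hi hai => ha (mem_biUnion hi hai)
      simp [f, ha, Finset.sum_eq_zero fun i hi => indicator_of_notMem (this i hi) _]
  have hV_sq : ∫⁻ a, V.indicator 1 a ^ 2 ∂μ = μ V := by
    have h_idem (a : α) : V.indicator (1 : α → ℝ≥0∞) a ^ 2 = V.indicator 1 a := by
      by_cases ha : a ∈ V <;> simp [ha]
    simp_rw [h_idem]
    exact lintegral_indicator_one hV
  calc (∑ i ∈ s, μ (E i)) ^ 2 = (∫⁻ a, f a * V.indicator 1 a ∂μ) ^ 2 := by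
        simp_rw [hf_support, hf_lintegral]
    _ ≤ (∫⁻ a, f a ^ 2 ∂μ) * ∫⁻ a, V.indicator 1 a ^ 2 ∂μ :=
        sq_lintegral_mul_le_lintegral_sq_mul_lintegral_sq hf.aemeasurable
          (measurable_one.indicator hV).aemeasurable
    _ = μ V * ∑ i ∈ s, ∑ j ∈ s, μ (E i ∩ E j) := by rw [hf_sq, hV_sq, mul_comm]

theorem sum_sum_measure_inter_le {ι : Type*} [DecidableEq ι] (s : Finset ι) {E : ι → Set α}
    {c : ℝ≥0∞} (h : ∀ i ∈ s, ∀ j ∈ s, i ≠ j → μ (E i ∩ E j) ≤ c * μ (E i) * μ (E j)) :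
    ∑ i ∈ s, ∑ j ∈ s, μ (E i ∩ E j) ≤ ∑ i ∈ s, μ (E i) + c * (∑ i ∈ s, μ (E i)) ^ 2 := by
  calc ∑ i ∈ s, ∑ j ∈ s, μ (E i ∩ E j)
      ≤ ∑ i ∈ s, ∑ j ∈ s, ((if i = j then μ (E i) else 0) + c * μ (E i) * μ (E j)) := by
        gcongr with i hi j hj
        by_cases hij : i = j
        · simp [hij]
        · simpa [hij] using h i hi j hj hij
    _ = ∑ i ∈ s, μ (E i) + c * (∑ i ∈ s, μ (E i)) ^ 2 := by
        simp_rw [Finset.sum_add_distrib, sq, Finset.sum_mul_sum, Finset.mul_sum, mul_assoc]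
        simp

end MeasureTheory

namespace ENNReal

theorem tendsto_sum_range_nat_add_of_tsum_eq_top {f : ℕ → ℝ≥0∞} (hf : ∑' n, f n = ∞) {m : ℕ}
    (hm : ∑ i ∈ range m, f i ≠ ∞) :
    Tendsto (fun n => ∑ i ∈ range n, f (i + m)) atTop (𝓝 ∞) := by
  have htail : ∑' i, f (i + m) = ∞ := by
    rw [← ENNReal.summable.sum_add_tsum_nat_add' (k := m), ENNReal.add_eq_top] at hf
    exact hf.resolve_left hm
  exact htail ▸ ENNReal.tendsto_nat_tsum _

theorem inv_le_of_sq_le_mul_add {β : Type*} {l : Filter β} [l.NeBot] {T : β → ℝ≥0∞}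
    {a c : ℝ≥0∞} (hT : Tendsto T l (𝓝 ∞)) (hT_fin : ∀ x, T x ≠ ∞)
    (h : ∀ x, T x ^ 2 ≤ a * (T x + c * T x ^ 2)) : c⁻¹ ≤ a := by
  rcases eq_or_ne a ∞ with rfl | ha
  · exact le_top
  have h_one : ∀ᶠ x in l, 1 ≤ a * ((T x)⁻¹ + c) := by
    filter_upwards [hT.eventually_ne ENNReal.top_ne_zero] with x hx
    have hT2 : T x ^ 2 ≠ 0 := pow_ne_zero 2 hx
    have hT2' : T x ^ 2 ≠ ∞ := ENNReal.pow_ne_top (hT_fin x)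
    rw [← ENNReal.mul_le_mul_iff_left hT2 hT2', one_mul, mul_assoc, add_mul,
      sq (T x), ← mul_assoc, ENNReal.inv_mul_cancel hx (hT_fin x), one_mul, ← sq]
    exact h x
  have h_lim : Tendsto (fun x => a * ((T x)⁻¹ + c)) l (𝓝 (a * (0 + c))) := by
    refine ENNReal.Tendsto.const_mul (Tendsto.add ?_ tendsto_const_nhds) (Or.inr ha)
    simpa using hT.inv
  have h_ac : 1 ≤ a * c := by simpa using ge_of_tendsto h_lim h_one
  calc c⁻¹ ≤ c⁻¹ * (a * c) := le_mul_of_one_le_right' h_ac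
    _ = a * (c * c⁻¹) := by ring
    _ ≤ a := mul_le_of_le_one_right' (ENNReal.mul_inv_le_one c)

end ENNReal

theorem stmt_4_general {X : Type*} [MeasurableSpace X] (ν : Measure X) [IsProbabilityMeasure ν]
    (E : ℕ → Set X) (hE : ∀ n, MeasurableSet (E n)) (c : ℝ) (L : ℕ)
    (hdiv : ∑' n, ν (E n) = ⊤)
    (hquasi : ∀ i j, L < i → L < j → i ≠ j →
      ν (E i ∩ E j) ≤ ENNReal.ofReal c * ν (E i) * ν (E j)) :
    ENNReal.ofReal (1 / c) ≤ ν (limsup E atTop) := by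
  have h_tail (m : ℕ) (hm : L < m) : (ENNReal.ofReal c)⁻¹ ≤ ν (⋃ i, E (i + m)) := by
    have h_fin (s : Finset ℕ) (F : ℕ → Set X) : ∑ i ∈ s, ν (F i) ≠ ⊤ :=
      ENNReal.sum_ne_top.2 fun _ _ => measure_ne_top _ _
    refine ENNReal.inv_le_of_sq_le_mul_add (T := fun n => ∑ i ∈ range n, ν (E (i + m)))
      (ENNReal.tendsto_sum_range_nat_add_of_tsum_eq_top hdiv (h_fin _ _))
      (fun n => h_fin _ _) fun n => ?_
    calc _ ≤ ν (⋃ i ∈ range n, E (i + m)) *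
          ∑ i ∈ range n, ∑ j ∈ range n, ν (E (i + m) ∩ E (j + m)) :=
          sq_sum_measure_le_measure_biUnion_mul _ fun i _ => hE _
      _ ≤ _ := mul_le_mul' (measure_mono (iUnion₂_subset_iUnion _ _))
          (sum_sum_measure_inter_le _ fun i _ j _ hij =>
            hquasi _ _ (by omega) (by omega) (by omega))
  have h_anti : Antitone fun m => ⋃ i, E (i + m) := fun m n hmn =>
    iUnion_mono' fun i => ⟨i + (n - m), by rw [show i + (n - m) + m = i + n by omega]⟩
  rw [show limsup E atTop = ⋂ m, ⋃ i, E (i + m) from limsup_eq_iInf_iSup_of_nat',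
    h_anti.measure_iInter (fun m => (MeasurableSet.iUnion fun i => hE _).nullMeasurableSet)
      ⟨0, measure_ne_top _ _⟩]
  refine le_iInf fun m => ?_
  calc ENNReal.ofReal (1 / c) ≤ (ENNReal.ofReal c)⁻¹ := by rw [one_div]; exact ENNReal.ofReal_inv_le
    _ ≤ ν (⋃ i, E (i + max m (L + 1))) := h_tail _ (by omega)
    _ ≤ ν (⋃ i, E (i + m)) := measure_mono (h_anti (le_max_left _ _))

theorem stmt_4 {X : Type*} [MeasurableSpace X] (ν : Measure X) [IsProbabilityMeasure ν]
    (E : ℕ → Set X) (hE : ∀ n, MeasurableSet (E n)) (c : ℝ) (hc : 1 ≤ c) (L : ℕ)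
    (hdiv : ∑' n, ν (E n) = ⊤)
    (hquasi : ∀ i j, L < i → L < j → i ≠ j →
      ν (E i ∩ E j) ≤ ENNReal.ofReal c * ν (E i) * ν (E j)) :
    ENNReal.ofReal (1 / c) ≤ ν (limsup E atTop) :=
  stmt_4_general ν E hE c L hdiv hquasi
end

section
/- Let ψ : ℕ → ℝ⁺ be a non-decreasing function tending to infinity with ∑_{n=1}^∞ n^{r−1} ψ(n)^{−r} = ∞ for some integer r ≥ 1. Then there exists a non-decreasing function φ : ℕ → ℝ⁺ with φ(n) ≥ ψ(n) for all n, such that n/φ(n) → 0 as n → ∞ and ∑_{n=1}^∞ n^{r−1} φ(n)^{−r} = ∞. -/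
open Filter Finset

/-!
Put `a n = n ^ (r - 1) / ψ n ^ r`. By the Abel–Dini theorem, `a n / (1 + ∑_{i ≤ n} a i)` still has
divergent sum; applying it a second time yields a monotone weight
`X = (1 + ∑ a) * (1 + ∑ a / (1 + ∑ a))` with `(∑_{i ≤ n} a i) / X n → 0` and `∑ a / X = ∞`.
Take `φ = ψ * X ^ (1 / r)`: then `n ^ (r - 1) / φ n ^ r = a n / X n`, and since `ψ` is monotone,
`n ^ r ≤ r * ψ n ^ r * ∑_{i ≤ n} a i`, so `(n / φ n) ^ r ≤ r * (∑_{i ≤ n} a i) / X n → 0`.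
-/

theorem pow_le_mul_sum_range_pow_sub_one {r : ℕ} (hr : r ≠ 0) (n : ℕ) :
    (n : ℝ) ^ r ≤ r * ∑ i ∈ range (n + 1), (i : ℝ) ^ (r - 1) := by
  have hstep (i : ℕ) : ((i : ℝ) + 1) ^ r - (i : ℝ) ^ r ≤ r * ((i : ℝ) + 1) ^ (r - 1) := by
    have := abs_pow_sub_pow_le ((i : ℝ) + 1) i r
    rw [add_sub_cancel_left, abs_one, one_mul, Nat.abs_cast,
      abs_of_nonneg (by positivity : (0 : ℝ) ≤ i + 1), max_eq_left (by linarith)] at this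
    exact (le_abs_self _).trans this
  calc (n : ℝ) ^ r = ∑ i ∈ range n, (((i : ℝ) + 1) ^ r - (i : ℝ) ^ r) := by
        have := sum_range_sub (fun i : ℕ => (i : ℝ) ^ r) n
        push_cast at this
        simp [this, hr]
    _ ≤ ∑ i ∈ range n, r * ((i : ℝ) + 1) ^ (r - 1) := sum_le_sum fun i _ => hstep i
    _ ≤ r * ∑ i ∈ range (n + 1), (i : ℝ) ^ (r - 1) := by
        rw [← mul_sum, sum_range_succ' _ n]
        push_cast
        exact mul_le_mul_of_nonneg_left (le_add_of_nonneg_right (by positivity)) (by positivity)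

theorem div_pow_le_mul_sum_range_div_pow {r : ℕ} (hr : r ≠ 0) {ψ : ℕ → ℝ} (hpos : ∀ n, 0 < ψ n)
    (hmono : Monotone ψ) (n : ℕ) :
    ((n : ℝ) / ψ n) ^ r ≤ r * ∑ i ∈ range (n + 1), (i : ℝ) ^ (r - 1) / ψ i ^ r := by
  have hψ (i : ℕ) : 0 < ψ i ^ r := pow_pos (hpos i) r
  calc ((n : ℝ) / ψ n) ^ r ≤ r * ∑ i ∈ range (n + 1), (i : ℝ) ^ (r - 1) / ψ n ^ r := by
        rw [div_pow, ← sum_div, ← mul_div_assoc]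
        exact div_le_div_of_nonneg_right (pow_le_mul_sum_range_pow_sub_one hr n) (hψ n).le
    _ ≤ r * ∑ i ∈ range (n + 1), (i : ℝ) ^ (r - 1) / ψ i ^ r := by
        refine mul_le_mul_of_nonneg_left (sum_le_sum fun i hi => ?_) (by positivity)
        refine div_le_div_of_nonneg_left (by positivity) (hψ i) ?_
        exact pow_le_pow_left₀ (hpos i).le (hmono (Nat.lt_succ_iff.mp (mem_range.mp hi))) r

theorem monotone_one_add_sum_range {f : ℕ → ℝ} (hf : ∀ n, 0 ≤ f n) :
    Monotone fun n => 1 + ∑ i ∈ range n, f i := fun _ _ hmn =>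
  add_le_add_right (sum_le_sum_of_subset_of_nonneg (range_subset_range.mpr hmn)
    fun i _ _ => hf i) 1

theorem not_summable_div_one_add_sum_range {f : ℕ → ℝ} (hf : ∀ n, 0 ≤ f n)
    (h : ¬Summable f) : ¬Summable fun n => f n / (1 + ∑ i ∈ range (n + 1), f i) := by
  set T : ℕ → ℝ := fun n => 1 + ∑ i ∈ range n, f i
  have hT_pos (n : ℕ) : 0 < T n := by
    have := sum_nonneg fun i (_ : i ∈ range n) => hf i
    positivity
  have hT_mono : Monotone T := monotone_one_add_sum_range hf
  have hT_top : Tendsto T atTop atTop :=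
    tendsto_atTop_add_const_left _ 1 ((not_summable_iff_tendsto_nat_atTop_of_nonneg hf).mp h)
  intro hs
  obtain ⟨m, hm⟩ :=
    Metric.cauchySeq_iff'.mp hs.hasSum.tendsto_sum_nat.cauchySeq (1 / 2) (by norm_num)
  obtain ⟨M, hTM, hmM⟩ :=
    ((hT_top.eventually_ge_atTop (2 * T m)).and (eventually_ge_atTop m)).exists
  have hblock : 1 / 2 ≤ ∑ i ∈ Ico m M, f i / T (i + 1) :=
    calc 1 / 2 ≤ (T M - T m) / T M := by
          rw [le_div_iff₀ (hT_pos M)]; linarith [hT_pos m]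
      _ = ∑ i ∈ Ico m M, f i / T M := by
          rw [← sum_div, sum_Ico_eq_sub _ hmM]; simp only [T]; ring
      _ ≤ ∑ i ∈ Ico m M, f i / T (i + 1) :=
          sum_le_sum fun i hi => div_le_div_of_nonneg_left (hf i) (hT_pos _)
            (hT_mono (mem_Ico.mp hi).2)
  have := hm M hmM
  rw [Real.dist_eq, ← sum_Ico_eq_sub _ hmM] at this
  linarith [le_abs_self (∑ i ∈ Ico m M, f i / T (i + 1))]

theorem exists_monotone_not_summable_div {f : ℕ → ℝ} (hf : ∀ n, 0 ≤ f n) (h : ¬Summable f) :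
    ∃ X : ℕ → ℝ, Monotone X ∧ (∀ n, 1 ≤ X n) ∧
      Tendsto (fun n => (∑ i ∈ range (n + 1), f i) / X n) atTop (nhds 0) ∧
      ¬Summable fun n => f n / X n := by
  set g : ℕ → ℝ := fun n => f n / (1 + ∑ i ∈ range (n + 1), f i)
  have hg_nonneg (n : ℕ) : 0 ≤ g n := by
    have := sum_nonneg fun i (_ : i ∈ range (n + 1)) => hf i
    have := hf n
    positivity
  have hg : ¬Summable g := not_summable_div_one_add_sum_range hf h
  have hS (n : ℕ) : 0 ≤ ∑ i ∈ range (n + 1), f i := sum_nonneg fun i _ => hf i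
  have hG (n : ℕ) : 0 ≤ ∑ i ∈ range (n + 1), g i := sum_nonneg fun i _ => hg_nonneg i
  have hG_top : Tendsto (fun n => 1 + ∑ i ∈ range (n + 1), g i) atTop atTop :=
    tendsto_atTop_add_const_left _ 1
      (((not_summable_iff_tendsto_nat_atTop_of_nonneg hg_nonneg).mp hg).comp
        (tendsto_add_atTop_nat 1))
  refine ⟨fun n => (1 + ∑ i ∈ range (n + 1), f i) * (1 + ∑ i ∈ range (n + 1), g i),
    ?_, fun n => one_le_mul_of_one_le_of_one_le (by linarith [hS n]) (by linarith [hG n]),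
    ?_, ?_⟩
  · intro m n hmn
    exact mul_le_mul (monotone_one_add_sum_range hf (by omega : m + 1 ≤ n + 1))
      (monotone_one_add_sum_range hg_nonneg (by omega : m + 1 ≤ n + 1))
      (by linarith [hG m]) (by linarith [hS n])
  · refine squeeze_zero (fun n => by have := hS n; have := hG n; positivity) (fun n => ?_)
      (tendsto_inv_atTop_zero.comp hG_top)
    calc (∑ i ∈ range (n + 1), f i) /
          ((1 + ∑ i ∈ range (n + 1), f i) * (1 + ∑ i ∈ range (n + 1), g i))
        = (∑ i ∈ range (n + 1), f i) / (1 + ∑ i ∈ range (n + 1), f i) /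
          (1 + ∑ i ∈ range (n + 1), g i) := (div_div _ _ _).symm
      _ ≤ 1 / (1 + ∑ i ∈ range (n + 1), g i) :=
          div_le_div_of_nonneg_right (div_le_one_of_le₀ (by linarith) (by linarith [hS n]))
            (by linarith [hG n])
      _ = (1 + ∑ i ∈ range (n + 1), g i)⁻¹ := one_div _
  · convert not_summable_div_one_add_sum_range hg_nonneg hg using 2 with n
    exact (div_div _ _ _).symm

theorem tendsto_nhds_zero_of_tendsto_pow {α : Type*} {l : Filter α} {u : α → ℝ} {r : ℕ}
    (hr : r ≠ 0) (hu : ∀ a, 0 ≤ u a) (h : Tendsto (fun a => u a ^ r) l (nhds 0)) :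
    Tendsto u l (nhds 0) := by
  have := h.rpow_const (p := (r : ℝ)⁻¹) (Or.inr (by positivity))
  simpa [Real.pow_rpow_inv_natCast (hu _) hr, Real.zero_rpow (by positivity : (r : ℝ)⁻¹ ≠ 0)]
    using this

theorem stmt_5_general (r : ℕ) (hr : 1 ≤ r) (ψ : ℕ → ℝ) (hpos : ∀ n, 0 < ψ n)
    (hmono : Monotone ψ)
    (hdiv : ¬ Summable (fun n : ℕ => (n : ℝ) ^ (r - 1) / ψ n ^ r)) :
    ∃ φ : ℕ → ℝ, (∀ n, 0 < φ n) ∧ Monotone φ ∧ (∀ n, ψ n ≤ φ n) ∧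
      Tendsto (fun n : ℕ => (n : ℝ) / φ n) atTop (nhds 0) ∧
      ¬ Summable (fun n : ℕ => (n : ℝ) ^ (r - 1) / φ n ^ r) := by
  have hr0 : r ≠ 0 := by omega
  have ha (n : ℕ) : 0 ≤ (n : ℝ) ^ (r - 1) / ψ n ^ r := by have := hpos n; positivity
  obtain ⟨X, hX_mono, hX_one, hX_lim, hX_div⟩ := exists_monotone_not_summable_div ha hdiv
  have hX_pos (n : ℕ) : 0 < X n := zero_lt_one.trans_le (hX_one n)
  set φ : ℕ → ℝ := fun n => ψ n * X n ^ (r⁻¹ : ℝ)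
  have hφ_pow (n : ℕ) : φ n ^ r = ψ n ^ r * X n := by
    rw [mul_pow, Real.rpow_inv_natCast_pow (hX_pos n).le hr0]
  have hφ_pos (n : ℕ) : 0 < φ n := mul_pos (hpos n) (Real.rpow_pos_of_pos (hX_pos n) _)
  refine ⟨φ, hφ_pos, fun m n hmn => ?_, fun n => ?_, ?_, ?_⟩
  · exact mul_le_mul (hmono hmn) (Real.rpow_le_rpow (hX_pos m).le (hX_mono hmn) (by positivity))
      (Real.rpow_nonneg (hX_pos m).le _) (hpos n).le
  · exact le_mul_of_one_le_right (hpos n).le (Real.one_le_rpow (hX_one n) (by positivity))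
  · refine tendsto_nhds_zero_of_tendsto_pow hr0
      (fun n => div_nonneg n.cast_nonneg (hφ_pos n).le) ?_
    refine squeeze_zero (fun n => by have := hφ_pos n; positivity) (fun n => ?_)
      (by simpa using hX_lim.const_mul (r : ℝ))
    calc ((n : ℝ) / φ n) ^ r = ((n : ℝ) / ψ n) ^ r / X n := by
          rw [div_pow, hφ_pow, div_pow, div_div]
      _ ≤ r * (∑ i ∈ range (n + 1), (i : ℝ) ^ (r - 1) / ψ i ^ r) / X n :=
          div_le_div_of_nonneg_right (div_pow_le_mul_sum_range_div_pow hr0 hpos hmono n)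
            (hX_pos n).le
      _ = r * ((∑ i ∈ range (n + 1), (i : ℝ) ^ (r - 1) / ψ i ^ r) / X n) := mul_div_assoc _ _ _
  · simpa only [hφ_pow, div_div] using hX_div

theorem stmt_5 (r : ℕ) (hr : 1 ≤ r) (ψ : ℕ → ℝ) (hpos : ∀ n, 0 < ψ n)
    (hmono : Monotone ψ) (htend : Tendsto ψ atTop atTop)
    (hdiv : ¬ Summable (fun n : ℕ => (n : ℝ) ^ (r - 1) / ψ n ^ r)) :
    ∃ φ : ℕ → ℝ, (∀ n, 0 < φ n) ∧ Monotone φ ∧ (∀ n, ψ n ≤ φ n) ∧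
      Tendsto (fun n : ℕ => (n : ℝ) / φ n) atTop (nhds 0) ∧
      ¬ Summable (fun n : ℕ => (n : ℝ) ^ (r - 1) / φ n ^ r) :=
  stmt_5_general r hr ψ hpos hmono hdiv
end

section
/- Let μ be the Gauss measure and A_n^k = {x ∈ [0,1) : a_k(x) ≥ ψ(n)} where ψ(n) ≥ 1. For any indices 1 ≤ k₁ < k₂, there exists an absolute constant K₂ (independent of n, k₁, k₂) such that μ(A_n^{k₁} ∩ A_n^{k₂}) ≤ K₂ · μ(A_n^1)². -/
open MeasureTheory Filter Set

/-- The Gauss map. -/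
noncomputable def gaussMap (x : ℝ) : ℝ := if x = 0 then 0 else 1 / x - ⌊(1 / x : ℝ)⌋

/-- The `k`-th partial quotient of the continued fraction expansion of `x` (for `k ≥ 1`). -/
noncomputable def cfa (k : ℕ) (x : ℝ) : ℕ := ⌊1 / (gaussMap^[k - 1] x)⌋₊

/-- The Gauss measure on `[0,1)`, with density `1/((1+x) log 2)` w.r.t. Lebesgue measure. -/
noncomputable def gaussμ : Measure ℝ :=
  (volume.restrict (Set.Ico (0 : ℝ) 1)).withDensity
    fun x => ENNReal.ofReal (1 / ((1 + x) * Real.log 2))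

/-- The set `A_n^k = {x ∈ [0,1) : a_k(x) ≥ ψ(n)}`. -/
noncomputable def Aset (ψ : ℕ → ℝ) (n k : ℕ) : Set ℝ :=
  {x ∈ Set.Ico (0 : ℝ) 1 | ψ n ≤ (cfa k x : ℝ)}
/-!
The Gauss map `T x = {1/x}` preserves `gaussμ`: on distribution functions, `T⁻¹[0, t]` is the
disjoint union of the intervals `[1/(a+t), 1/a]`, `a ≥ 1`, whose Gauss measures telescope to
`log₂ (1 + t)`. Writing `N = ⌈ψ n⌉` and `I = (0, 1/N] = {a₁ ≥ N}`, invariance moves the first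
index to `1`, so `A_n^{k₁} ∩ A_n^{k₂}` has at most the measure of `I ∩ T⁻¹ S` with
`S = T^{-(k₂-k₁-1)} I`. On `I` the inverse branches `y ↦ 1/(a+y)`, `a ≥ N`, contract Lebesgue
measure by `a⁻²`, and `∑_{a ≥ N} a⁻² ≤ 2/N`; since the Gauss density lies between `1/2` and `2`,
this gives `μ(I ∩ T⁻¹ S) ≤ 16 μ(I) μ(S)`, and `μ(S) = μ(I) = μ(A_n^1)` by invariance again.
-/

open scoped ENNReal

lemma gaussMap_eq_fract (x : ℝ) : gaussMap x = Int.fract x⁻¹ := by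
  rw [gaussMap, one_div, ← Int.self_sub_floor]
  split_ifs with hx <;> simp [hx]

lemma gaussMap_mem_Ico (x : ℝ) : gaussMap x ∈ Ico (0 : ℝ) 1 := by
  rw [gaussMap_eq_fract]
  exact ⟨Int.fract_nonneg _, Int.fract_lt_one _⟩

lemma measurable_gaussMap : Measurable gaussMap := by
  rw [funext gaussMap_eq_fract]
  exact measurable_fract.comp measurable_inv

lemma gaussDensity_le {x : ℝ} (hx : 0 ≤ x) :
    ENNReal.ofReal (1 / ((1 + x) * Real.log 2)) ≤ 2 := by
  rw [← ENNReal.ofReal_ofNat]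
  refine ENNReal.ofReal_le_ofReal ?_
  rw [div_le_iff₀ (by positivity)]
  nlinarith [Real.log_two_gt_d9]

lemma two_inv_le_gaussDensity {x : ℝ} (hx₀ : 0 ≤ x) (hx₁ : x ≤ 1) :
    (2⁻¹ : ℝ≥0∞) ≤ ENNReal.ofReal (1 / ((1 + x) * Real.log 2)) := by
  rw [← ENNReal.ofReal_ofNat, ← ENNReal.ofReal_inv_of_pos two_pos]
  refine ENNReal.ofReal_le_ofReal ?_
  rw [le_div_iff₀ (by positivity)]
  nlinarith [Real.log_two_lt_d9, Real.log_two_gt_d9]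

lemma gaussμ_le_two_smul : gaussμ ≤ (2 : ℝ≥0∞) • volume.restrict (Ico (0 : ℝ) 1) := by
  rw [gaussμ, ← withDensity_const]
  exact withDensity_mono ((ae_restrict_iff' measurableSet_Ico).2 <|
    Filter.Eventually.of_forall fun x hx => gaussDensity_le hx.1)

lemma two_inv_smul_le_gaussμ : (2⁻¹ : ℝ≥0∞) • volume.restrict (Ico (0 : ℝ) 1) ≤ gaussμ := by
  rw [gaussμ, ← withDensity_const]
  exact withDensity_mono ((ae_restrict_iff' measurableSet_Ico).2 <|
    Filter.Eventually.of_forall fun x hx => two_inv_le_gaussDensity hx.1 hx.2.le)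

lemma gaussμ_le_two_mul_volume (s : Set ℝ) : gaussμ s ≤ 2 * volume (s ∩ Ico 0 1) := by
  simpa [Measure.restrict_apply' measurableSet_Ico] using gaussμ_le_two_smul s

lemma volume_le_two_mul_gaussμ (s : Set ℝ) : volume (s ∩ Ico 0 1) ≤ 2 * gaussμ s := by
  have := two_inv_smul_le_gaussμ s
  rw [Measure.smul_apply, Measure.restrict_apply' measurableSet_Ico, smul_eq_mul] at this
  exact (ENNReal.inv_mul_le_iff two_ne_zero ENNReal.ofNat_ne_top).1 this

instance isFiniteMeasure_gaussμ : IsFiniteMeasure gaussμ :=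
  ⟨(gaussμ_le_two_mul_volume univ).trans_lt (by simp)⟩

lemma gaussμ_compl_Ico : gaussμ (Ico (0 : ℝ) 1)ᶜ = 0 := by
  simpa using gaussμ_le_two_mul_volume (Ico (0 : ℝ) 1)ᶜ

lemma gaussμ_compl_Ioc : gaussμ (Ioc (0 : ℝ) 1)ᶜ = 0 := by
  have hsub : (Ioc (0 : ℝ) 1)ᶜ ∩ Ico 0 1 ⊆ {0} := fun x ⟨hx, hx₀, hx₁⟩ =>
    le_antisymm (not_lt.1 fun h => hx ⟨h, hx₁.le⟩) hx₀
  simpa [measure_mono_null hsub (measure_singleton 0)] using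
    gaussμ_le_two_mul_volume (Ioc (0 : ℝ) 1)ᶜ

lemma hasDerivAt_logb_one_add {x : ℝ} (hx : 1 + x ≠ 0) :
    HasDerivAt (fun y => Real.logb 2 (1 + y)) (1 / ((1 + x) * Real.log 2)) x := by
  have h := (((hasDerivAt_id x).const_add 1).log hx).div_const (Real.log 2)
  exact h.congr_deriv (by rw [div_div, id])

lemma gaussμ_Icc {u v : ℝ} (hu : 0 ≤ u) (huv : u ≤ v) (hv : v ≤ 1) :
    gaussμ (Icc u v) = ENNReal.ofReal (Real.logb 2 (1 + v) - Real.logb 2 (1 + u)) := by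
  have hset : (Icc u v ∩ Ico 0 1 : Set ℝ) =ᵐ[volume] Icc u v := by
    refine ((Filter.EventuallyEq.refl _ _).inter Ico_ae_eq_Icc).trans ?_
    exact Filter.EventuallyEq.of_eq (inter_eq_left.2 (Icc_subset_Icc hu hv))
  have hcont : ContinuousOn (fun x : ℝ => 1 / ((1 + x) * Real.log 2)) (Icc u v) :=
    continuousOn_const.div (by fun_prop) fun x hx => by
      have := hu.trans hx.1
      positivity
  rw [gaussμ, withDensity_apply _ measurableSet_Icc, Measure.restrict_restrict measurableSet_Icc,
    Measure.restrict_congr_set hset, ← ofReal_integral_eq_lintegral_ofReal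
      (hcont.integrableOn_compact isCompact_Icc) ?_, integral_Icc_eq_integral_Ioc,
    ← intervalIntegral.integral_of_le huv, intervalIntegral.integral_eq_sub_of_hasDerivAt
      (fun x hx => hasDerivAt_logb_one_add <| by
        have := hu.trans (uIcc_of_le huv ▸ hx).1
        positivity)
      (hcont.intervalIntegrable_of_Icc huv)]
  filter_upwards [ae_restrict_mem measurableSet_Icc] with x hx
  have := hu.trans hx.1
  positivity

lemma hasSum_sub_succ_of_antitone {g : ℕ → ℝ} (hg : Antitone g)
    (hlim : Filter.Tendsto g Filter.atTop (nhds 0)) :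
    HasSum (fun n => g n - g (n + 1)) (g 0) := by
  rw [hasSum_iff_tendsto_nat_of_nonneg fun n => sub_nonneg.2 (hg n.le_succ)]
  simp_rw [Finset.sum_range_sub']
  simpa using tendsto_const_nhds.sub hlim

lemma mem_Icc_inv_iff {x b c : ℝ} (hb : 0 < b) (hc : 0 < c) :
    x ∈ Icc c⁻¹ b⁻¹ ↔ x⁻¹ ∈ Icc b c := by
  rcases le_or_gt x 0 with hx | hx
  · have h1 : x⁻¹ ≤ 0 := inv_nonpos.2 hx
    constructor <;> rintro ⟨h, -⟩ <;> linarith [inv_pos.2 hc]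
  · rw [mem_Icc, mem_Icc, inv_le_comm₀ hc hx, le_inv_comm₀ hx hb, and_comm]

lemma fract_le_iff_exists_mem_Icc {y t : ℝ} (hy : 1 ≤ y) :
    Int.fract y ≤ t ↔ ∃ a : ℕ, y ∈ Icc ((a : ℝ) + 1) (a + 1 + t) := by
  rw [← Int.self_sub_floor]
  constructor
  · intro h
    have h1 : (1 : ℤ) ≤ ⌊y⌋ := Int.le_floor.2 (by simpa using hy)
    obtain ⟨a, ha⟩ := Int.eq_ofNat_of_zero_le (sub_nonneg.2 h1)
    have hfloor : (⌊y⌋ : ℝ) = a + 1 := by exact_mod_cast (by omega : ⌊y⌋ = (a : ℤ) + 1)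
    exact ⟨a, hfloor ▸ Int.floor_le y, by linarith⟩
  · rintro ⟨a, hlo, hhi⟩
    have : ((a : ℤ) + 1 : ℤ) ≤ ⌊y⌋ := Int.le_floor.2 (by push_cast; exact hlo)
    have : (a : ℝ) + 1 ≤ ⌊y⌋ := by exact_mod_cast this
    linarith

lemma floor_eq_of_mem_Icc {y t : ℝ} {a : ℕ} (ht : t < 1) (hy : y ∈ Icc ((a : ℝ) + 1) (a + 1 + t)) :
    ⌊y⌋ = a + 1 :=
  Int.floor_eq_iff.2 ⟨by push_cast; exact hy.1, by push_cast; linarith [hy.2]⟩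

-- `Ioc 0 1` rather than `Ico 0 1`: the branch `a = 0` contains its endpoint `1`, where `T 1 = 0`.
lemma preimage_gaussMap_Iic_inter_Ioc {t : ℝ} (ht : 0 ≤ t) :
    gaussMap ⁻¹' Iic t ∩ Ioc 0 1 = ⋃ a : ℕ, Icc ((a : ℝ) + 1 + t)⁻¹ ((a : ℝ) + 1)⁻¹ := by
  ext x
  simp only [mem_inter_iff, mem_preimage, mem_Iic, mem_Ioc, mem_iUnion, gaussMap_eq_fract]
  constructor
  · rintro ⟨hT, hx₀, hx₁⟩
    obtain ⟨a, ha⟩ := (fract_le_iff_exists_mem_Icc ((one_le_inv₀ hx₀).2 hx₁)).1 hT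
    exact ⟨a, (mem_Icc_inv_iff (by positivity) (by positivity)).2 ha⟩
  · rintro ⟨a, ha⟩
    rw [mem_Icc_inv_iff (by positivity) (by positivity)] at ha
    have hx₀ : 0 < x := inv_pos.1 (by linarith [ha.1])
    have hx₁ : 1 ≤ x⁻¹ := by linarith [ha.1]
    exact ⟨(fract_le_iff_exists_mem_Icc hx₁).2 ⟨a, ha⟩, hx₀, (one_le_inv₀ hx₀).1 hx₁⟩

lemma logb_one_add_inv_sub_logb_one_add_inv {a t : ℝ} (ha : 0 < a) (ht : 0 ≤ t) :
    Real.logb 2 (1 + a⁻¹) - Real.logb 2 (1 + (a + t)⁻¹) =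
      Real.logb 2 (1 + t / a) - Real.logb 2 (1 + t / (a + 1)) := by
  rw [← Real.logb_div (by positivity) (by positivity),
    ← Real.logb_div (by positivity) (by positivity)]
  congr 1
  field_simp
  ring

lemma tendsto_logb_one_add_div_add_one (t : ℝ) :
    Filter.Tendsto (fun n : ℕ => Real.logb 2 (1 + t / (n + 1))) Filter.atTop (nhds 0) := by
  have h := (tendsto_one_div_add_atTop_nhds_zero_nat.const_mul t).const_add 1
  rw [mul_zero, add_zero] at h
  simpa [Function.comp_def, div_eq_mul_inv] using
    (Real.continuousAt_logb (b := 2) one_ne_zero).tendsto.comp h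

lemma gaussμ_Iic {t : ℝ} (ht₀ : 0 ≤ t) (ht₁ : t < 1) :
    gaussμ (Iic t) = ENNReal.ofReal (Real.logb 2 (1 + t)) := by
  have h : Iic t ∩ Ico 0 1 = Icc 0 t ∩ Ico 0 1 := by
    ext x
    simp only [mem_inter_iff, mem_Iic, mem_Icc, mem_Ico]
    constructor
    · rintro ⟨hxt, hx₀, hx₁⟩
      exact ⟨⟨hx₀, hxt⟩, hx₀, hx₁⟩
    · rintro ⟨⟨hx₀, hxt⟩, -, hx₁⟩
      exact ⟨hxt, hx₀, hx₁⟩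
  rw [← measure_inter_conull gaussμ_compl_Ico, h, measure_inter_conull gaussμ_compl_Ico,
    gaussμ_Icc le_rfl ht₀ ht₁.le, add_zero, Real.logb_one, sub_zero]

lemma gaussμ_preimage_gaussMap_Iic_of_nonneg_of_lt_one {t : ℝ} (ht₀ : 0 ≤ t) (ht₁ : t < 1) :
    gaussμ (gaussMap ⁻¹' Iic t) = gaussμ (Iic t) := by
  set J : ℕ → Set ℝ := fun a => Icc ((a : ℝ) + 1 + t)⁻¹ ((a : ℝ) + 1)⁻¹
  set g : ℕ → ℝ := fun a => Real.logb 2 (1 + t / (a + 1))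
  have hJ : ∀ a, gaussμ (J a) = ENNReal.ofReal (g a - g (a + 1)) := fun a => by
    rw [gaussμ_Icc (by positivity) (inv_anti₀ (by positivity) (by linarith))
      (inv_le_one_of_one_le₀ (by linarith [a.cast_nonneg (α := ℝ)])),
      logb_one_add_inv_sub_logb_one_add_inv (by positivity) ht₀]
    simp only [g, Nat.cast_succ]
  have hg : Antitone g := fun a b hab => by
    simp only [g]
    gcongr
    norm_num
  have hdisj : Pairwise (Function.onFun Disjoint J) := fun a b hab => by
    refine Set.disjoint_left.2 fun x hxa hxb => hab ?_
    rw [mem_Icc_inv_iff (by positivity) (by positivity)] at hxa hxb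
    have := (floor_eq_of_mem_Icc ht₁ hxa).symm.trans (floor_eq_of_mem_Icc ht₁ hxb)
    omega
  have hsum := hasSum_sub_succ_of_antitone hg (tendsto_logb_one_add_div_add_one t)
  calc gaussμ (gaussMap ⁻¹' Iic t) = gaussμ (gaussMap ⁻¹' Iic t ∩ Ioc 0 1) :=
        (measure_inter_conull gaussμ_compl_Ioc).symm
    _ = ∑' a, gaussμ (J a) := by
        rw [preimage_gaussMap_Iic_inter_Ioc ht₀, measure_iUnion hdisj fun a => measurableSet_Icc]
    _ = ENNReal.ofReal (g 0) := by
        simp_rw [hJ]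
        rw [← ENNReal.ofReal_tsum_of_nonneg (fun a => sub_nonneg.2 (hg a.le_succ)) hsum.summable,
          hsum.tsum_eq]
    _ = gaussμ (Iic t) := by
        rw [gaussμ_Iic ht₀ ht₁]
        simp [g]

lemma gaussμ_preimage_gaussMap_Iic (t : ℝ) : gaussμ (gaussMap ⁻¹' Iic t) = gaussμ (Iic t) := by
  rcases lt_or_ge t 0 with ht₀ | ht₀
  · have hT : gaussMap ⁻¹' Iic t = ∅ :=
      eq_empty_of_forall_notMem fun x hx => ((gaussMap_mem_Ico x).1.trans hx).not_gt ht₀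
    rw [hT, measure_empty, eq_comm]
    exact measure_mono_null (fun x (hx : x ≤ t) (hx' : x ∈ Ico 0 1) => (hx'.1.trans hx).not_gt ht₀)
      gaussμ_compl_Ico
  rcases lt_or_ge t 1 with ht₁ | ht₁
  · exact gaussμ_preimage_gaussMap_Iic_of_nonneg_of_lt_one ht₀ ht₁
  · have hT : gaussMap ⁻¹' Iic t = univ :=
      eq_univ_of_forall fun x => (gaussMap_mem_Ico x).2.le.trans ht₁
    rw [hT, ← measure_inter_conull gaussμ_compl_Ico, univ_inter,
      ← measure_inter_conull gaussμ_compl_Ico (s := Iic t),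
      inter_eq_right.2 fun x hx => hx.2.le.trans ht₁]

theorem measurePreserving_gaussMap : MeasurePreserving gaussMap gaussμ gaussμ :=
  ⟨measurable_gaussMap, Measure.ext_of_Iic _ _ fun t => by
    rw [Measure.map_apply measurable_gaussMap measurableSet_Iic, gaussμ_preimage_gaussMap_Iic]⟩

lemma lipschitzOnWith_inv_add {a : ℝ} (ha : 0 < a) :
    LipschitzOnWith (a ^ 2)⁻¹.toNNReal (fun y : ℝ => (y + a)⁻¹) (Ici 0) := by
  refine LipschitzOnWith.of_dist_le_mul fun x (hx : 0 ≤ x) y (hy : 0 ≤ y) => ?_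
  have hxy : a ^ 2 ≤ (x + a) * (y + a) := by nlinarith
  rw [Real.dist_eq, Real.dist_eq, inv_sub_inv (by positivity) (by positivity),
    add_sub_add_right_eq_sub, abs_div, abs_of_pos (show 0 < (x + a) * (y + a) by positivity),
    abs_sub_comm, Real.coe_toNNReal _ (by positivity), div_eq_inv_mul]
  gcongr

lemma volume_image_inv_add_le {a : ℝ} (ha : 0 < a) {s : Set ℝ} (hs : s ⊆ Ici 0) :
    volume ((fun y : ℝ => (y + a)⁻¹) '' s) ≤ ENNReal.ofReal (a ^ 2)⁻¹ * volume s := by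
  have h := ((lipschitzOnWith_inv_add ha).mono hs).hausdorffMeasure_image_le zero_le_one
  rw [hausdorffMeasure_real, ENNReal.rpow_one] at h
  exact h

lemma Ioc_inter_preimage_gaussMap_subset (N : ℕ) (s : Set ℝ) :
    Ioc 0 (N : ℝ)⁻¹ ∩ gaussMap ⁻¹' s ⊆
      ⋃ b : ℕ, (fun y : ℝ => (y + (N + b : ℕ))⁻¹) '' (s ∩ Ico 0 1) := by
  rintro x ⟨⟨hx₀, hxN⟩, hxs⟩
  have hNx : (N : ℝ) ≤ x⁻¹ := by
    rcases N.eq_zero_or_pos with rfl | hN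
    · simpa using hx₀.le
    · exact (le_inv_comm₀ hx₀ (by positivity)).1 hxN
  have hNfloor : N ≤ ⌊x⁻¹⌋₊ := Nat.le_floor hNx
  refine mem_iUnion.2 ⟨⌊x⁻¹⌋₊ - N, gaussMap x, ⟨hxs, gaussMap_mem_Ico x⟩, ?_⟩
  dsimp only
  rw [Nat.add_sub_cancel' hNfloor, gaussMap_eq_fract, ← Int.self_sub_floor,
    ← Int.natCast_floor_eq_floor (by positivity), Int.cast_natCast, sub_add_cancel, inv_inv]

lemma tsum_ofReal_inv_sq_le {N : ℕ} (hN : N ≠ 0) :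
    ∑' b : ℕ, ENNReal.ofReal (((N + b : ℕ) : ℝ) ^ 2)⁻¹ ≤ 2 * ENNReal.ofReal (N : ℝ)⁻¹ := by
  rw [← ENNReal.ofReal_ofNat, ← ENNReal.ofReal_mul zero_le_two, ← div_eq_mul_inv]
  refine ENNReal.tsum_le_of_sum_range_le fun n => ?_
  rw [← ENNReal.ofReal_sum_of_nonneg fun b _ => by positivity]
  refine ENNReal.ofReal_le_ofReal ?_
  obtain ⟨k, rfl⟩ := Nat.exists_eq_add_one_of_ne_zero hN
  calc ∑ b ∈ Finset.range n, (((k + 1 + b : ℕ) : ℝ) ^ 2)⁻¹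
      = ∑ i ∈ Finset.Ico (k + 1) (k + 1 + n), ((i : ℝ) ^ 2)⁻¹ := by
        rw [Finset.sum_Ico_eq_sum_range, Nat.add_sub_cancel_left]
    _ ≤ ∑ i ∈ Finset.Ioo k (k + 1 + n), ((i : ℝ) ^ 2)⁻¹ :=
        Finset.sum_le_sum_of_subset_of_nonneg
          (fun i hi => by simp only [Finset.mem_Ico, Finset.mem_Ioo] at hi ⊢; omega)
          fun _ _ _ => by positivity
    _ ≤ 2 / ((k + 1 : ℕ) : ℝ) := by
        simpa using sum_Ioo_inv_sq_le (α := ℝ) k (k + 1 + n)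

lemma volume_Ioc_inter_preimage_gaussMap_le {N : ℕ} (hN : N ≠ 0) (s : Set ℝ) :
    volume (Ioc 0 (N : ℝ)⁻¹ ∩ gaussMap ⁻¹' s) ≤
      2 * ENNReal.ofReal (N : ℝ)⁻¹ * volume (s ∩ Ico 0 1) :=
  calc volume (Ioc 0 (N : ℝ)⁻¹ ∩ gaussMap ⁻¹' s)
      ≤ ∑' b : ℕ, volume ((fun y : ℝ => (y + (N + b : ℕ))⁻¹) '' (s ∩ Ico 0 1)) :=
        (measure_mono (Ioc_inter_preimage_gaussMap_subset N s)).trans (measure_iUnion_le _)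
    _ ≤ ∑' b : ℕ, ENNReal.ofReal (((N + b : ℕ) : ℝ) ^ 2)⁻¹ * volume (s ∩ Ico 0 1) :=
        ENNReal.tsum_le_tsum fun b => volume_image_inv_add_le (by positivity)
          fun y hy => hy.2.1
    _ ≤ 2 * ENNReal.ofReal (N : ℝ)⁻¹ * volume (s ∩ Ico 0 1) := by
        rw [ENNReal.tsum_mul_right]
        gcongr
        exact tsum_ofReal_inv_sq_le hN

lemma ofReal_inv_le_two_mul_gaussμ_Ioc {N : ℕ} (hN : N ≠ 0) :
    ENNReal.ofReal (N : ℝ)⁻¹ ≤ 2 * gaussμ (Ioc 0 (N : ℝ)⁻¹) := by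
  have hN₁ : (N : ℝ)⁻¹ ≤ 1 := inv_le_one_of_one_le₀ (by exact_mod_cast Nat.one_le_iff_ne_zero.2 hN)
  calc ENNReal.ofReal (N : ℝ)⁻¹ = volume (Ioo 0 (N : ℝ)⁻¹) := by rw [Real.volume_Ioo, sub_zero]
    _ ≤ volume (Ioc 0 (N : ℝ)⁻¹ ∩ Ico 0 1) :=
        measure_mono fun x hx => ⟨Ioo_subset_Ioc_self hx, hx.1.le, hx.2.trans_le hN₁⟩
    _ ≤ 2 * gaussμ (Ioc 0 (N : ℝ)⁻¹) := volume_le_two_mul_gaussμ _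

theorem gaussμ_Ioc_inter_preimage_gaussMap_le {N : ℕ} (hN : N ≠ 0) (s : Set ℝ) :
    gaussμ (Ioc 0 (N : ℝ)⁻¹ ∩ gaussMap ⁻¹' s) ≤
      16 * gaussμ (Ioc 0 (N : ℝ)⁻¹) * gaussμ s :=
  calc gaussμ (Ioc 0 (N : ℝ)⁻¹ ∩ gaussMap ⁻¹' s)
      ≤ 2 * volume (Ioc 0 (N : ℝ)⁻¹ ∩ gaussMap ⁻¹' s) :=
        (gaussμ_le_two_mul_volume _).trans (by gcongr 2 * ?_; exact measure_mono inter_subset_left)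
    _ ≤ 2 * (2 * ENNReal.ofReal (N : ℝ)⁻¹ * (2 * gaussμ s)) := by
        gcongr
        exact (volume_Ioc_inter_preimage_gaussMap_le hN s).trans
          (by gcongr; exact volume_le_two_mul_gaussμ s)
    _ ≤ 2 * (2 * (2 * gaussμ (Ioc 0 (N : ℝ)⁻¹)) * (2 * gaussμ s)) := by
        gcongr
        exact ofReal_inv_le_two_mul_gaussμ_Ioc hN
    _ = 16 * gaussμ (Ioc 0 (N : ℝ)⁻¹) * gaussμ s := by ring

lemma le_natFloor_one_div_iff {r y : ℝ} (hr : 0 < r) :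
    r ≤ (⌊1 / y⌋₊ : ℝ) ↔ y ∈ Ioc 0 (⌈r⌉₊ : ℝ)⁻¹ := by
  have hN : (0 : ℝ) < ⌈r⌉₊ := by exact_mod_cast Nat.ceil_pos.2 hr
  rw [← Nat.ceil_le, Nat.le_floor_iff' (Nat.ceil_pos.2 hr).ne', one_div, mem_Ioc]
  constructor
  · intro h
    have hy : 0 < y := inv_pos.1 (hN.trans_le h)
    exact ⟨hy, (le_inv_comm₀ hy hN).2 h⟩
  · rintro ⟨hy, h⟩
    exact (le_inv_comm₀ hy hN).1 h

lemma Aset_eq {ψ : ℕ → ℝ} {n : ℕ} (hψ : 0 < ψ n) (k : ℕ) :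
    Aset ψ n k = Ico 0 1 ∩ gaussMap^[k - 1] ⁻¹' Ioc 0 (⌈ψ n⌉₊ : ℝ)⁻¹ := by
  ext x
  simp only [Aset, cfa, mem_ofPred_eq, mem_inter_iff, mem_preimage, le_natFloor_one_div_iff hψ]

lemma preimage_iterate_inter_preimage_iterate {α : Type*} (f : α → α) {i j : ℕ} (hij : i < j)
    (s t : Set α) :
    f^[i] ⁻¹' s ∩ f^[j] ⁻¹' t = f^[i] ⁻¹' (s ∩ f ⁻¹' (f^[j - i - 1] ⁻¹' t)) := by
  ext x
  simp only [mem_inter_iff, mem_preimage, ← Function.iterate_succ_apply,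
    ← Function.iterate_add_apply]
  rw [show (j - i - 1).succ + i = j by omega]

theorem stmt_8 :
    ∃ K₂ : ℝ, 0 < K₂ ∧ ∀ (ψ : ℕ → ℝ), (∀ n, 1 ≤ ψ n) → ∀ n k₁ k₂ : ℕ,
      1 ≤ k₁ → k₁ < k₂ →
      gaussμ (Aset ψ n k₁ ∩ Aset ψ n k₂) ≤
        ENNReal.ofReal K₂ * gaussμ (Aset ψ n 1) ^ 2 := by
  refine ⟨16, by norm_num, fun ψ hψ n k₁ k₂ hk₁ hk₁₂ => ?_⟩
  have hψn : 0 < ψ n := by linarith [hψ n]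
  set I : Set ℝ := Ioc 0 (⌈ψ n⌉₊ : ℝ)⁻¹
  set S : Set ℝ := gaussMap^[k₂ - 1 - (k₁ - 1) - 1] ⁻¹' I
  have hT := measurePreserving_gaussMap
  have hS : MeasurableSet S := measurable_gaussMap.iterate _ measurableSet_Ioc
  have hsub : Aset ψ n k₁ ∩ Aset ψ n k₂ ⊆ gaussMap^[k₁ - 1] ⁻¹' (I ∩ gaussMap ⁻¹' S) := by
    rw [Aset_eq hψn, Aset_eq hψn, ← preimage_iterate_inter_preimage_iterate _ (by omega)]
    exact inter_subset_inter inter_subset_right inter_subset_right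
  have hA₁ : gaussμ (Aset ψ n 1) = gaussμ I := by
    rw [Aset_eq hψn, Nat.sub_self, Function.iterate_zero, preimage_id, inter_comm,
      measure_inter_conull gaussμ_compl_Ico]
  calc gaussμ (Aset ψ n k₁ ∩ Aset ψ n k₂) ≤ gaussμ (I ∩ gaussMap ⁻¹' S) :=
        (measure_mono hsub).trans_eq <| (hT.iterate _).measure_preimage
          (measurableSet_Ioc.inter (measurable_gaussMap hS)).nullMeasurableSet
    _ ≤ 16 * gaussμ I * gaussμ S :=
        gaussμ_Ioc_inter_preimage_gaussMap_le (Nat.ceil_pos.2 hψn).ne' S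
    _ = ENNReal.ofReal 16 * gaussμ (Aset ψ n 1) ^ 2 := by
        rw [(hT.iterate _).measure_preimage measurableSet_Ioc.nullMeasurableSet, hA₁,
          ENNReal.ofReal_ofNat, sq, mul_assoc]
end

section
/- Let ψ : ℕ → ℝ⁺ be non-decreasing and suppose liminf_{n→∞} (log ψ(n))/n = ∞ and liminf_{n→∞} (log log ψ(n))/n = log b with 1 < b < ∞. Then for every c with 1 < c < b, the set F(r, ψ) is contained in {x ∈ [0,1) : a_n(x) ≥ e^{cⁿ} for infinitely many n}, and for every d > b, the set {x ∈ [0,1) : a_n(x) ≥ e^{dⁿ} for all sufficiently large n} is contained in F(r, ψ). -/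
open MeasureTheory Filter Set

/-- The set `F(r, ψ)` of points with at least `r` partial quotients `≥ ψ(n)` among the
first `n` terms, for infinitely many `n`. -/
noncomputable def Fset (r : ℕ) (ψ : ℕ → ℝ) : Set ℝ :=
  {x | x ∈ Set.Ico (0 : ℝ) 1 ∧ ∀ N : ℕ, ∃ n ≥ N, ∃ k : Fin r → ℕ,
    StrictMono k ∧ (∀ i, 1 ≤ k i ∧ k i ≤ n) ∧ ∀ i, ψ n ≤ (cfa (k i) x : ℝ)}

/-! From `log ψ n ≥ n` and the liminf condition, `ψ n ≥ exp (c ^ n)` for all large `n` when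
`c < b`, while `ψ n ≤ exp (d' ^ n)` for infinitely many `n` when `b < d'`. In the first case, since
`ψ → ∞` and only finitely many indices are below any bound, a partial quotient `a_k ≥ ψ n` with
`k ≤ n` must have `k` large, and then `a_k ≥ ψ n ≥ ψ k ≥ exp (c ^ k)`. In the second, choosing
`b < d' < d`, the last `r` indices `k ∈ (n - r, n]` satisfy
`a_k ≥ exp (d ^ k) ≥ exp (d ^ (n - r)) ≥ exp (d' ^ n) ≥ ψ n` for those infinitely many `n`. -/

open Real

theorem Real.exp_pow_lt_iff_log_lt_log_log_div {c y : ℝ} {n : ℕ} (hn : 0 < n) (hc : 0 < c)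
    (hy : 1 < y) : exp (c ^ n) < y ↔ log c < log (log y) / n := by
  rw [← lt_log_iff_exp_lt (by linarith), ← log_lt_log_iff (by positivity) (log_pos hy), log_pow,
    lt_div_iff₀ (by positivity), mul_comm]

theorem eventually_natCast_le_of_tendsto_div_atTop {f : ℕ → ℝ}
    (h : Tendsto (fun n : ℕ => f n / n) atTop atTop) : ∀ᶠ n : ℕ in atTop, (n : ℝ) ≤ f n := by
  filter_upwards [h.eventually_ge_atTop 1, eventually_gt_atTop 0] with n hn hn0
  rwa [le_div_iff₀ (by positivity), one_mul] at hn

theorem eventually_pow_le_pow_sub {a b : ℝ} (ha : 0 < a) (hab : a < b) (r : ℕ) :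
    ∀ᶠ n in atTop, a ^ n ≤ b ^ (n - r) := by
  have hb : 0 < b := ha.trans hab
  filter_upwards [(tendsto_pow_atTop_atTop_of_one_lt ((one_lt_div ha).2 hab)).eventually_ge_atTop
    (b ^ r), eventually_ge_atTop r] with n hn hrn
  rw [div_pow, le_div_iff₀ (by positivity), mul_comm] at hn
  refine le_of_mul_le_mul_right ?_ (pow_pos hb r)
  rwa [← pow_add, Nat.sub_add_cancel hrn]

theorem frequently_le_of_frequently_exists_le {a g ψ : ℕ → ℝ} (hmono : Monotone ψ)
    (htop : Tendsto ψ atTop atTop) (hg : ∀ᶠ k in atTop, g k ≤ ψ k)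
    (h : ∃ᶠ n in atTop, ∃ k ≤ n, ψ n ≤ a k) : ∃ᶠ k in atTop, g k ≤ a k := by
  contrapose! h
  obtain ⟨K, hK⟩ := eventually_atTop.1 (h.and hg)
  obtain ⟨M, hM⟩ := ((finite_Iio K).image a).bddAbove
  filter_upwards [htop.eventually_gt_atTop M] with n hn k hkn
  rcases lt_or_ge k K with hk | hk
  · exact (hM (mem_image_of_mem a hk)).trans_lt hn
  · exact ((hK k hk).1.trans_le (hK k hk).2).trans_le (hmono hkn)

section LogLogLiminf

variable {ψ : ℕ → ℝ} (hψ : ∀ᶠ n in atTop, exp 1 ≤ ψ n)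
include hψ

theorem eventually_exp_pow_lt_of_log_lt_liminf {c : ℝ} (hc : 0 < c)
    (h : log c < liminf (fun n : ℕ => log (log (ψ n)) / n) atTop) :
    ∀ᶠ n in atTop, exp (c ^ n) < ψ n := by
  have hbdd : IsBoundedUnder (· ≥ ·) atTop (fun n : ℕ => log (log (ψ n)) / n) :=
    isBoundedUnder_of_eventually_ge (a := 0) <| hψ.mono fun n hn =>
      div_nonneg (log_nonneg ((le_log_iff_exp_le ((exp_pos 1).trans_le hn)).2 hn)) n.cast_nonneg
  filter_upwards [eventually_lt_of_lt_liminf h hbdd, hψ, eventually_gt_atTop 0]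
    with n hn hn1 hn0
  exact (exp_pow_lt_iff_log_lt_log_log_div hn0 hc ((one_lt_exp_iff.2 one_pos).trans_le hn1)).2 hn

theorem frequently_le_exp_pow_of_liminf_lt_log {d : ℝ} (hd : 0 < d)
    (hcobdd : IsCoboundedUnder (· ≥ ·) atTop (fun n : ℕ => log (log (ψ n)) / n))
    (h : liminf (fun n : ℕ => log (log (ψ n)) / n) atTop < log d) :
    ∃ᶠ n in atTop, ψ n ≤ exp (d ^ n) := by
  refine (frequently_lt_of_liminf_lt hcobdd h).mp ?_
  filter_upwards [hψ, eventually_gt_atTop 0] with n hn1 hn0 hn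
  exact le_of_not_gt fun h' => lt_asymm hn
    ((exp_pow_lt_iff_log_lt_log_log_div hn0 hd ((one_lt_exp_iff.2 one_pos).trans_le hn1)).1 h')

end LogLogLiminf

theorem frequently_exists_le_cfa_of_mem_Fset {r : ℕ} (hr : 1 ≤ r) {ψ : ℕ → ℝ} {x : ℝ}
    (hx : x ∈ Fset r ψ) : ∃ᶠ n in atTop, ∃ k ≤ n, ψ n ≤ cfa k x :=
  frequently_atTop.2 fun N =>
    let ⟨n, hn, k, _, hk, hψ⟩ := hx.2 N
    ⟨n, hn, k ⟨0, hr⟩, (hk _).2, hψ _⟩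

theorem mem_Fset_of_frequently {r : ℕ} {ψ : ℕ → ℝ} {x : ℝ} (hx : x ∈ Ico (0 : ℝ) 1)
    (h : ∃ᶠ n in atTop, r ≤ n ∧ ∀ k, n - r < k → k ≤ n → ψ n ≤ cfa k x) : x ∈ Fset r ψ := by
  refine ⟨hx, fun N => ?_⟩
  obtain ⟨n, hn, hrn, hψ⟩ := frequently_atTop.1 h N
  have hk : ∀ i : Fin r, n - r < n - r + 1 + i ∧ n - r + 1 + i ≤ n := fun i => by
    have := i.isLt
    omega
  exact ⟨n, hn, fun i => n - r + 1 + i, fun i j hij => Nat.add_lt_add_left hij _,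
    fun i => ⟨le_add_right (Nat.le_add_left _ _), (hk i).2⟩, fun i => hψ _ (hk i).1 (hk i).2⟩

theorem mem_Fset_of_frequently_le_exp_pow {r : ℕ} {ψ : ℕ → ℝ} {d' d : ℝ} (hd' : 1 ≤ d')
    (hd'd : d' < d) (hψ : ∃ᶠ n in atTop, ψ n ≤ exp (d' ^ n)) {x : ℝ} (hx : x ∈ Ico (0 : ℝ) 1)
    {N : ℕ} (hN : ∀ n ≥ N, exp (d ^ n) ≤ cfa n x) : x ∈ Fset r ψ := by
  refine mem_Fset_of_frequently hx <| (hψ.and_eventually <|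
    (eventually_pow_le_pow_sub (by linarith) hd'd r).and (eventually_ge_atTop (N + r))).mono ?_
  rintro n ⟨hψn, hpow, hn⟩
  refine ⟨by omega, fun k hk hkn => ?_⟩
  calc ψ n ≤ exp (d' ^ n) := hψn
    _ ≤ exp (d ^ (n - r)) := exp_le_exp.2 hpow
    _ ≤ exp (d ^ k) := exp_le_exp.2 (pow_le_pow_right₀ (by linarith) hk.le)
    _ ≤ cfa k x := hN k (by omega)

theorem stmt_15 (r : ℕ) (hr : 1 ≤ r) (ψ : ℕ → ℝ) (hpos : ∀ n, 0 < ψ n)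
    (hmono : Monotone ψ)
    (hB : Tendsto (fun n : ℕ => Real.log (ψ n) / n) atTop atTop)
    (b : ℝ) (hb1 : 1 < b)
    (hb : Filter.liminf (fun n : ℕ => Real.log (Real.log (ψ n)) / n) atTop = Real.log b) :
    (∀ c : ℝ, 1 < c → c < b →
      Fset r ψ ⊆ {x ∈ Set.Ico (0 : ℝ) 1 |
        ∀ N : ℕ, ∃ n ≥ N, Real.exp (c ^ n) ≤ (cfa n x : ℝ)}) ∧
    (∀ d : ℝ, b < d →
      {x ∈ Set.Ico (0 : ℝ) 1 | ∃ N : ℕ, ∀ n ≥ N, Real.exp (d ^ n) ≤ (cfa n x : ℝ)} ⊆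
        Fset r ψ) := by
  have hlog : ∀ᶠ n : ℕ in atTop, (n : ℝ) ≤ log (ψ n) :=
    eventually_natCast_le_of_tendsto_div_atTop hB
  have hψe : ∀ᶠ n in atTop, exp 1 ≤ ψ n := by
    filter_upwards [hlog, eventually_ge_atTop 1] with n hn hn1
    exact (le_log_iff_exp_le (hpos n)).1 (le_trans (by exact_mod_cast hn1) hn)
  have htop : Tendsto ψ atTop atTop := by
    refine tendsto_atTop_mono' _ (hlog.mono fun n hn => hn.trans ?_) tendsto_natCast_atTop_atTop
    linarith [log_le_sub_one_of_pos (hpos n)]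
  refine ⟨fun c hc1 hcb x hx => ⟨hx.1, frequently_atTop.1 ?_⟩, fun d hbd x hx => ?_⟩
  · have hc : ∀ᶠ n in atTop, exp (c ^ n) ≤ ψ n :=
      (eventually_exp_pow_lt_of_log_lt_liminf hψe (by linarith)
        (hb ▸ log_lt_log (by linarith) hcb)).mono fun _ => le_of_lt
    exact frequently_le_of_frequently_exists_le hmono htop hc
      (frequently_exists_le_cfa_of_mem_Fset hr hx)
  · obtain ⟨d', hbd', hd'd⟩ := exists_between hbd
    have hcobdd : IsCoboundedUnder (· ≥ ·) atTop (fun n : ℕ => log (log (ψ n)) / n) := by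
      -- otherwise `liminf` takes the junk value `0`, whereas `log b > 0`
      by_contra h
      exact (log_pos hb1).ne' (hb ▸ Real.liminf_of_not_isCoboundedUnder h)
    have hψd' : ∃ᶠ n in atTop, ψ n ≤ exp (d' ^ n) :=
      frequently_le_exp_pow_of_liminf_lt_log hψe (by linarith) hcobdd
        (hb ▸ log_lt_log (by linarith) hbd')
    obtain ⟨N, hN⟩ := hx.2
    exact mem_Fset_of_frequently_le_exp_pow (by linarith) hd'd hψd' hx.1 hN
end
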